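/- arXiv:1208.5274 — 2 statements merged into one kernel-verified Lean document; each statement's English description precedes it below -/
import Mathlib

section
/- Let λ₀, λ₁ : ℂ → ℂ be holomorphic. Then the map f := (λ₀ + λ₁j)⁻¹(λ₂ + λ₃j), defined where λ₀ + λ₁j ≠ 0, for holomorphic λ₂, λ₃, satisfies ∗df = ((λ₀+λ₁j)⁻¹ i (λ₀+λ₁j))·df, i.e., f is a conformal map with left normal N = (λ₀+λ₁j)⁻¹ i (λ₀+λ₁j). -/
/-- The embedding `ℂ ⊂ ℍ`, `a₀ + a₁ i ↦ ⟨a₀, a₁, 0, 0⟩`. -/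
def toQ (z : ℂ) : Quaternion ℝ := ⟨z.re, z.im, 0, 0⟩
/-- The quaternion `i`. -/
def qi : Quaternion ℝ := ⟨0, 1, 0, 0⟩
/-- The quaternion `j`. -/
def qj : Quaternion ℝ := ⟨0, 0, 1, 0⟩

noncomputable def toQCLM : ℂ →L[ℝ] Quaternion ℝ :=
  LinearMap.toContinuousLinearMap Quaternion.ofComplex.toLinearMap

lemma toQCLM_apply (z : ℂ) : toQCLM z = toQ z := rfl
lemma toQ_mul (z w : ℂ) : toQ (z * w) = toQ z * toQ w := Quaternion.coeComplex_mul z w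
lemma toQ_I : toQ Complex.I = qi := rfl

lemma key_alg (a b A B : Quaternion ℝ) (ha : a ≠ 0) :
    a⁻¹ * (qi * B) + -(a⁻¹ * (qi * A) * a⁻¹) * b =
      (a⁻¹ * qi * a) * (a⁻¹ * B + -(a⁻¹ * A * a⁻¹) * b) := by
  have h1 : ∀ x : Quaternion ℝ, a * (a⁻¹ * x) = x := fun x => by
    rw [← mul_assoc, mul_inv_cancel₀ ha, one_mul]
  simp [mul_add, mul_neg, neg_mul, mul_assoc, h1]

/-- For holomorphic `λ₀, λ₁, λ₂, λ₃` on an open `U ⊆ ℂ` with `λ₀ + λ₁j` nowhere zero,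
the map `f := (λ₀+λ₁j)⁻¹(λ₂+λ₃j)` satisfies `∗df = ((λ₀+λ₁j)⁻¹ i (λ₀+λ₁j))·df`,
i.e. `f` is conformal with left normal `N = (λ₀+λ₁j)⁻¹ i (λ₀+λ₁j)`. -/
theorem twistor_formula_superconformal (U : Set ℂ) (hU : IsOpen U)
    (l₀ l₁ l₂ l₃ : ℂ → ℂ)
    (h₀ : DifferentiableOn ℂ l₀ U) (h₁ : DifferentiableOn ℂ l₁ U)
    (h₂ : DifferentiableOn ℂ l₂ U) (h₃ : DifferentiableOn ℂ l₃ U)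
    (hnz : ∀ z ∈ U, toQ (l₀ z) + toQ (l₁ z) * qj ≠ 0) :
    ∀ z ∈ U, ∀ v : ℂ,
      fderiv ℝ (fun w => (toQ (l₀ w) + toQ (l₁ w) * qj)⁻¹ *
          (toQ (l₂ w) + toQ (l₃ w) * qj)) z (Complex.I * v) =
        ((toQ (l₀ z) + toQ (l₁ z) * qj)⁻¹ * qi * (toQ (l₀ z) + toQ (l₁ z) * qj)) *
          fderiv ℝ (fun w => (toQ (l₀ w) + toQ (l₁ w) * qj)⁻¹ *
            (toQ (l₂ w) + toQ (l₃ w) * qj)) z v := by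
  intro z hz v
  have hgz : toQ (l₀ z) + toQ (l₁ z) * qj ≠ 0 := hnz z hz
  -- complex derivatives
  have hd₀ : HasDerivAt l₀ (deriv l₀ z) z :=
    ((h₀.differentiableAt (hU.mem_nhds hz))).hasDerivAt
  have hd₁ : HasDerivAt l₁ (deriv l₁ z) z :=
    ((h₁.differentiableAt (hU.mem_nhds hz))).hasDerivAt
  have hd₂ : HasDerivAt l₂ (deriv l₂ z) z :=
    ((h₂.differentiableAt (hU.mem_nhds hz))).hasDerivAt
  have hd₃ : HasDerivAt l₃ (deriv l₃ z) z :=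
    ((h₃.differentiableAt (hU.mem_nhds hz))).hasDerivAt
  set c₀ := deriv l₀ z; set c₁ := deriv l₁ z; set c₂ := deriv l₂ z; set c₃ := deriv l₃ z
  -- quaternion-valued derivatives of toQ ∘ lᵢ
  have hq : ∀ (l : ℂ → ℂ) (c : ℂ), HasDerivAt l c z →
      HasFDerivAt (fun w => toQ (l w))
        (toQCLM.comp ((ContinuousLinearMap.smulRight (1 : ℂ →L[ℂ] ℂ) c).restrictScalars ℝ)) z :=
    fun l c h => toQCLM.hasFDerivAt.comp z (h.hasFDerivAt.restrictScalars ℝ)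
  set D₀ := toQCLM.comp ((ContinuousLinearMap.smulRight (1 : ℂ →L[ℂ] ℂ) c₀).restrictScalars ℝ)
  set D₁ := toQCLM.comp ((ContinuousLinearMap.smulRight (1 : ℂ →L[ℂ] ℂ) c₁).restrictScalars ℝ)
  set D₂ := toQCLM.comp ((ContinuousLinearMap.smulRight (1 : ℂ →L[ℂ] ℂ) c₂).restrictScalars ℝ)
  set D₃ := toQCLM.comp ((ContinuousLinearMap.smulRight (1 : ℂ →L[ℂ] ℂ) c₃).restrictScalars ℝ)
  have hD : ∀ (c : ℂ) (u : ℂ),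
      (toQCLM.comp ((ContinuousLinearMap.smulRight (1 : ℂ →L[ℂ] ℂ) c).restrictScalars ℝ)) u
        = toQ (u * c) := by
    intro c u
    simp [toQCLM_apply, smul_eq_mul]
  -- derivative of g
  set Dg := D₀ + D₁.smulRight qj with hDg_def
  have hG : HasFDerivAt (fun w => toQ (l₀ w) + toQ (l₁ w) * qj) Dg z :=
    (hq l₀ c₀ hd₀).add
      ((hq l₁ c₁ hd₁).mul_const' qj)
  set Dh := D₂ + D₃.smulRight qj with hDh_def
  have hH : HasFDerivAt (fun w => toQ (l₂ w) + toQ (l₃ w) * qj) Dh z :=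
    (hq l₂ c₂ hd₂).add
      ((hq l₃ c₃ hd₃).mul_const' qj)
  set a := toQ (l₀ z) + toQ (l₁ z) * qj with ha_def
  set b := toQ (l₂ z) + toQ (l₃ z) * qj with hb_def
  -- derivative of inverse
  have hinv : HasFDerivAt (fun w => (toQ (l₀ w) + toQ (l₁ w) * qj)⁻¹)
      ((-(ContinuousLinearMap.mulLeftRight ℝ (Quaternion ℝ) a⁻¹ a⁻¹)).comp Dg) z :=
    (hasFDerivAt_inv' (𝕜 := ℝ) hgz).comp z hG
  set Dinv := (-(ContinuousLinearMap.mulLeftRight ℝ (Quaternion ℝ) a⁻¹ a⁻¹)).comp Dg with hDinv_def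
  have hF : HasFDerivAt (fun w => (toQ (l₀ w) + toQ (l₁ w) * qj)⁻¹ *
      (toQ (l₂ w) + toQ (l₃ w) * qj)) (a⁻¹ • Dh + Dinv.smulRight b) z := hinv.mul' hH
  rw [hF.fderiv]
  -- evaluate
  have happ : ∀ u : ℂ, (a⁻¹ • Dh + Dinv.smulRight b) u =
      a⁻¹ * (toQ (u * c₂) + toQ (u * c₃) * qj) +
        -(a⁻¹ * (toQ (u * c₀) + toQ (u * c₁) * qj) * a⁻¹) * b := by
    intro u
    simp only [Dinv, Dh, Dg, ContinuousLinearMap.add_apply, ContinuousLinearMap.smul_apply,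
      ContinuousLinearMap.smulRight_apply, ContinuousLinearMap.comp_apply,
      ContinuousLinearMap.neg_apply, ContinuousLinearMap.mulLeftRight_apply, hD,
      smul_eq_mul, mul_add, add_mul, neg_mul, mul_neg, mul_assoc, neg_add]
    simp only [D₀, D₁, D₂, D₃, hD]
  have hIv : ∀ c : ℂ, toQ ((Complex.I * v) * c) = qi * toQ (v * c) := by
    intro c
    rw [mul_assoc, toQ_mul, toQ_I]
  rw [happ, happ, hIv, hIv, hIv, hIv]
  have hcomm : ∀ x y : Quaternion ℝ, qi * x + (qi * y) * qj = qi * (x + y * qj) := by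
    intro x y; rw [mul_add, mul_assoc]
  rw [hcomm, hcomm]
  exact key_alg a b _ _ hgz
end

section
/- Let ψ : M → ℍ be a smooth nowhere-vanishing map on an open set M ⊆ ℂ satisfying ∗dψ = -N·dψ and N·ψ = ψ·i for a map N : M → S². Then for any smooth λ : M → ℍ, the map f := ψλ satisfies (df)_{-N} = ψ·(dλ)_{-i}. In particular, f satisfies ∗df = N·df if and only if λ = λ₀ + λ₁j with λ₀, λ₁ holomorphic. -/
@[simp] private lemma qi_re : qi.re = 0 := rfl
@[simp] private lemma qi_imI : qi.imI = 1 := rfl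
@[simp] private lemma qi_imJ : qi.imJ = 0 := rfl
@[simp] private lemma qi_imK : qi.imK = 0 := rfl
@[simp] private lemma toQ_re (z : ℂ) : (toQ z).re = z.re := rfl
@[simp] private lemma toQ_imI (z : ℂ) : (toQ z).imI = z.im := rfl
@[simp] private lemma toQ_imJ (z : ℂ) : (toQ z).imJ = 0 := rfl
@[simp] private lemma toQ_imK (z : ℂ) : (toQ z).imK = 0 := rfl
@[simp] private lemma qj_re : qj.re = 0 := rfl
@[simp] private lemma qj_imI : qj.imI = 0 := rfl
@[simp] private lemma qj_imJ : qj.imJ = 1 := rfl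
@[simp] private lemma qj_imK : qj.imK = 0 := rfl

private lemma qi_sq : qi * qi = -1 := by
  ext <;> simp [Quaternion.re_one, Quaternion.imI_one, Quaternion.imJ_one, Quaternion.imK_one]

private lemma qi_mul_toQ (w : ℂ) : qi * toQ w = toQ (Complex.I * w) := by
  ext <;> simp

/-- projection onto first complex component -/
noncomputable def P0 : Quaternion ℝ →L[ℝ] ℂ := LinearMap.toContinuousLinearMap
  { toFun := fun q => ⟨q.re, q.imI⟩
    map_add' := by intros; simp [Complex.ext_iff]
    map_smul' := by intros; simp [Complex.ext_iff] }

/-- projection onto second complex component -/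
noncomputable def P1 : Quaternion ℝ →L[ℝ] ℂ := LinearMap.toContinuousLinearMap
  { toFun := fun q => ⟨q.imJ, q.imK⟩
    map_add' := by intros; simp [Complex.ext_iff]
    map_smul' := by intros; simp [Complex.ext_iff] }

/-- toQ as a continuous linear map -/
noncomputable def TQ : ℂ →L[ℝ] Quaternion ℝ := LinearMap.toContinuousLinearMap
  { toFun := toQ
    map_add' := by intros; ext <;> simp
    map_smul' := by intros; ext <;> simp }

@[simp] private lemma P0_apply (q : Quaternion ℝ) : P0 q = ⟨q.re, q.imI⟩ := rfl
@[simp] private lemma P1_apply (q : Quaternion ℝ) : P1 q = ⟨q.imJ, q.imK⟩ := rfl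
@[simp] private lemma TQ_apply (w : ℂ) : TQ w = toQ w := rfl

private lemma P0_qi (q : Quaternion ℝ) : P0 (qi * q) = Complex.I * P0 q := by
  simp [Complex.ext_iff]

private lemma P1_qi (q : Quaternion ℝ) : P1 (qi * q) = Complex.I * P1 q := by
  simp [Complex.ext_iff]

private lemma clm_apply' (g : ℂ →L[ℝ] ℂ) (v : ℂ) : g v = v.re • g 1 + v.im • g Complex.I := by
  conv_lhs => rw [← Complex.re_add_im v]
  rw [show (v.re : ℂ) + v.im * Complex.I = v.re • (1:ℂ) + v.im • Complex.I by
    simp [Complex.real_smul]]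
  rw [map_add, map_smul, map_smul]

private lemma diffAt_c (f : ℂ → ℂ) (z : ℂ) (h : DifferentiableAt ℝ f z)
    (hCR : fderiv ℝ f z Complex.I = Complex.I * fderiv ℝ f z 1) :
    DifferentiableAt ℂ f z := by
  rw [differentiableAt_iff_restrictScalars ℝ h]
  refine ⟨(fderiv ℝ f z 1) • (ContinuousLinearMap.id ℂ ℂ), ?_⟩
  ext v
  simp only [ContinuousLinearMap.coe_restrictScalars', ContinuousLinearMap.smul_apply,
    ContinuousLinearMap.coe_id', id_eq, smul_eq_mul]
  rw [clm_apply' (fderiv ℝ f z) v, hCR]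
  push_cast [Complex.real_smul]
  nth_rewrite 1 [← Complex.re_add_im v]
  ring

private lemma fderiv_CR (f : ℂ → ℂ) (z : ℂ) (h : DifferentiableAt ℂ f z) (v : ℂ) :
    fderiv ℝ f z (Complex.I * v) = Complex.I * fderiv ℝ f z v := by
  rw [h.fderiv_restrictScalars ℝ]
  simp only [ContinuousLinearMap.coe_restrictScalars']
  rw [show Complex.I * v = Complex.I • v from rfl, map_smul, smul_eq_mul]

/-- Factorization theorem for super-conformal maps: if `ψ` is nowhere vanishing with
`∗dψ = N·dψ` and `N·ψ = ψ·i`, then for any smooth `λ` the map `f := ψλ` satisfies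
`(df)_{-N} = ψ·(dλ)_{-i}`; in particular `∗df = N·df` iff `λ = λ₀ + λ₁j` with
`λ₀, λ₁` holomorphic. -/
theorem factorization_superconformal (M : Set ℂ) (hM : IsOpen M)
    (ψ lam Nf : ℂ → Quaternion ℝ)
    (hψs : ContDiffOn ℝ (⊤ : ℕ∞) ψ M) (hls : ContDiffOn ℝ (⊤ : ℕ∞) lam M)
    (hψ0 : ∀ z ∈ M, ψ z ≠ 0)
    (hNval : ∀ z ∈ M, (Nf z).re = 0 ∧ (Nf z) ^ 2 = -1)
    (hsc : ∀ z ∈ M, ∀ v : ℂ, fderiv ℝ ψ z (Complex.I * v) = Nf z * fderiv ℝ ψ z v)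
    (heig : ∀ z ∈ M, Nf z * ψ z = ψ z * qi) :
    (∀ z ∈ M, ∀ v : ℂ,
      (2⁻¹ : ℝ) • (fderiv ℝ (fun w => ψ w * lam w) z v +
          Nf z * fderiv ℝ (fun w => ψ w * lam w) z (Complex.I * v)) =
        ψ z * ((2⁻¹ : ℝ) • (fderiv ℝ lam z v + qi * fderiv ℝ lam z (Complex.I * v)))) ∧
    ((∀ z ∈ M, ∀ v : ℂ, fderiv ℝ (fun w => ψ w * lam w) z (Complex.I * v) =
        Nf z * fderiv ℝ (fun w => ψ w * lam w) z v) ↔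
      (∃ l₀ l₁ : ℂ → ℂ, DifferentiableOn ℂ l₀ M ∧ DifferentiableOn ℂ l₁ M ∧
        ∀ z ∈ M, lam z = toQ (l₀ z) + toQ (l₁ z) * qj)) := by
  -- differentiability at points of M
  have hψd : ∀ z ∈ M, DifferentiableAt ℝ ψ z := fun z hz =>
    (hψs.contDiffAt (hM.mem_nhds hz)).differentiableAt (by simp)
  have hld : ∀ z ∈ M, DifferentiableAt ℝ lam z := fun z hz =>
    (hls.contDiffAt (hM.mem_nhds hz)).differentiableAt (by simp)
  -- product rule
  have hprod : ∀ z ∈ M, ∀ v : ℂ, fderiv ℝ (fun w => ψ w * lam w) z v =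
      fderiv ℝ ψ z v * lam z + ψ z * fderiv ℝ lam z v := by
    intro z hz v
    have h := ((hψd z hz).hasFDerivAt.mul' (hld z hz).hasFDerivAt).fderiv
    rw [show (fun w => ψ w * lam w) = ψ * lam from rfl, h]
    simp only [ContinuousLinearMap.add_apply, ContinuousLinearMap.smul_apply,
      ContinuousLinearMap.smulRight_apply, smul_eq_mul, op_smul_eq_mul]

    abel
  have hN2 : ∀ z ∈ M, Nf z * Nf z = -1 := by
    intro z hz
    have := (hNval z hz).2
    rwa [sq] at this
  -- part 1
  have part1 : ∀ z ∈ M, ∀ v : ℂ,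
      (2⁻¹ : ℝ) • (fderiv ℝ (fun w => ψ w * lam w) z v +
          Nf z * fderiv ℝ (fun w => ψ w * lam w) z (Complex.I * v)) =
        ψ z * ((2⁻¹ : ℝ) • (fderiv ℝ lam z v + qi * fderiv ℝ lam z (Complex.I * v))) := by
    intro z hz v
    rw [mul_smul_comm]
    congr 1
    rw [hprod z hz v, hprod z hz (Complex.I * v), hsc z hz v]
    set a := fderiv ℝ ψ z v
    set b := fderiv ℝ lam z v
    set c := fderiv ℝ lam z (Complex.I * v)
    set p := ψ z
    set n := Nf z
    set m := lam z
    have h1 : n * ((n * a) * m + p * c) = (n * n) * (a * m) + (n * p) * c := by noncomm_ring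
    rw [h1, hN2 z hz, heig z hz]
    noncomm_ring
  refine ⟨part1, ?_, ?_⟩
  · -- forward: derivative condition implies holomorphic decomposition
    intro hstar
    -- first get the Cauchy-Riemann type condition on lam
    have hCR : ∀ z ∈ M, ∀ v : ℂ,
        fderiv ℝ lam z (Complex.I * v) = qi * fderiv ℝ lam z v := by
      intro z hz v
      have h := part1 z hz v
      rw [hstar z hz v] at h
      have h0 : (2⁻¹ : ℝ) • (fderiv ℝ (fun w => ψ w * lam w) z v +
          Nf z * (Nf z * fderiv ℝ (fun w => ψ w * lam w) z v)) = 0 := by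
        rw [← mul_assoc, hN2 z hz]
        simp
      rw [h0] at h
      have h2 := (mul_eq_zero.mp h.symm).resolve_left (hψ0 z hz)
      have h3 : fderiv ℝ lam z v + qi * fderiv ℝ lam z (Complex.I * v) = 0 := by
        have := smul_eq_zero.mp h2
        rcases this with h | h
        · exact absurd h (by norm_num)
        · exact h
      have h4 := congrArg (fun x => qi * x) h3
      simp only [mul_add, ← mul_assoc, qi_sq, mul_zero, neg_one_mul] at h4
      rw [add_neg_eq_zero] at h4
      exact h4.symm
    refine ⟨fun w => P0 (lam w), fun w => P1 (lam w), ?_, ?_, ?_⟩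
    · intro z hz
      have h0 : HasFDerivAt (fun w => P0 (lam w)) (P0.comp (fderiv ℝ lam z)) z :=
        P0.hasFDerivAt.comp z (hld z hz).hasFDerivAt
      refine (diffAt_c _ _ h0.differentiableAt ?_).differentiableWithinAt
      rw [h0.fderiv]
      simp only [ContinuousLinearMap.coe_comp', Function.comp_apply]
      have hc := hCR z hz 1
      rw [mul_one] at hc
      rw [hc, P0_qi]
    · intro z hz
      have h0 : HasFDerivAt (fun w => P1 (lam w)) (P1.comp (fderiv ℝ lam z)) z :=
        P1.hasFDerivAt.comp z (hld z hz).hasFDerivAt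
      refine (diffAt_c _ _ h0.differentiableAt ?_).differentiableWithinAt
      rw [h0.fderiv]
      simp only [ContinuousLinearMap.coe_comp', Function.comp_apply]
      have hc := hCR z hz 1
      rw [mul_one] at hc
      rw [hc, P1_qi]
    · intro z hz
      ext <;> simp [P0_apply, P1_apply]
  · -- backward: decomposition implies derivative condition
    rintro ⟨l₀, l₁, hd0, hd1, heq⟩ z hz v
    have hz0 : DifferentiableAt ℂ l₀ z := hd0.differentiableAt (hM.mem_nhds hz)
    have hz1 : DifferentiableAt ℂ l₁ z := hd1.differentiableAt (hM.mem_nhds hz)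
    have hev : lam =ᶠ[nhds z] (fun w => TQ (l₀ w) + TQ (l₁ w) * qj) :=
      Filter.eventuallyEq_of_mem (hM.mem_nhds hz) (fun w hw => heq w hw)
    have hg : HasFDerivAt (fun w => TQ (l₀ w) + TQ (l₁ w) * qj)
        ((TQ.comp (fderiv ℝ l₀ z)) + ((TQ.comp (fderiv ℝ l₁ z)).smulRight qj)) z := by
      exact ((TQ.hasFDerivAt.comp z (hz0.restrictScalars ℝ).hasFDerivAt).add
        ((TQ.hasFDerivAt.comp z (hz1.restrictScalars ℝ).hasFDerivAt).mul_const' qj))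
    have hfd : fderiv ℝ lam z =
        (TQ.comp (fderiv ℝ l₀ z)) + ((TQ.comp (fderiv ℝ l₁ z)).smulRight qj) := by
      rw [hev.fderiv_eq, hg.fderiv]
    have hCRl : fderiv ℝ lam z (Complex.I * v) = qi * fderiv ℝ lam z v := by
      rw [hfd]
      simp only [ContinuousLinearMap.add_apply, ContinuousLinearMap.coe_comp',
        Function.comp_apply, ContinuousLinearMap.smulRight_apply, smul_eq_mul]
      rw [fderiv_CR l₀ z hz0 v, fderiv_CR l₁ z hz1 v]
      have t0 : TQ (Complex.I * fderiv ℝ l₀ z v) = qi * TQ (fderiv ℝ l₀ z v) :=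
        (qi_mul_toQ _).symm
      have t1 : TQ (Complex.I * fderiv ℝ l₁ z v) = qi * TQ (fderiv ℝ l₁ z v) :=
        (qi_mul_toQ _).symm
      rw [t0, t1, mul_add, mul_assoc]
    rw [hprod z hz (Complex.I * v), hprod z hz v, hsc z hz v, hCRl]
    have hexp : Nf z * (fderiv ℝ ψ z v * lam z + ψ z * fderiv ℝ lam z v) =
        (Nf z * fderiv ℝ ψ z v) * lam z + (Nf z * ψ z) * fderiv ℝ lam z v := by
      noncomm_ring
    rw [hexp, heig z hz]
    noncomm_ring
end
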